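/- Let ω be a concave modulus satisfying inf_{n∈ℕ} liminf_{h→∞} ω(h)/(n·ω(h/n)) = 0, and let η:(0,∞)→(0,∞) be non-decreasing with lim_{h→∞} η(h)/h = 0. Then liminf_{h→∞} ω(h)/ω_η(h) = 0. -/

import Mathlib

noncomputable def omegaEta (η ω : ℝ → ℝ) (h : ℝ) : ℝ :=
  sInf {s : ℝ | ∃ (n : ℕ) (x : ℕ → ℝ), 0 < n ∧ x 0 = 0 ∧ x n = h ∧
    (∀ j < n, x j < x (j + 1)) ∧
    s = ∑ j ∈ Finset.range n,
      max 1 ((x (j + 1) - x j) / η (x (j + 1))) * ω (x (j + 1) - x j)}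

/-- For a nonneg concave function on `[0,∞)`, `t * ω s ≤ s * ω t` when `0 ≤ t ≤ s`. -/
lemma conc_aux (ω : ℝ → ℝ) (hω_nonneg : ∀ x ≥ (0:ℝ), 0 ≤ ω x)
    (hω_conc : ConcaveOn ℝ (Set.Ici 0) ω) {t s : ℝ} (ht : 0 ≤ t) (hts : t ≤ s) :
    t * ω s ≤ s * ω t := by
  rcases eq_or_lt_of_le (ht.trans hts) with hs | hs
  · have ht0 : t = 0 := le_antisymm (hts.trans hs.symm.le) ht
    simp [ht0, ← hs]
  · have ha : 0 ≤ t / s := div_nonneg ht hs.le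
    have hb : 0 ≤ 1 - t / s := by
      have : t / s ≤ 1 := div_le_one_of_le₀ hts hs.le
      linarith
    have hc := hω_conc.2 (Set.mem_Ici.mpr (ht.trans hts)) (Set.mem_Ici.mpr le_rfl)
      ha hb (by ring)
    have he : (t / s) • s + (1 - t / s) • (0:ℝ) = t := by
      field_simp
      simp [hs.ne']
    rw [he] at hc
    have h0 : 0 ≤ ω 0 := hω_nonneg 0 le_rfl
    have : (t / s) * ω s ≤ ω t := by
      have : (t / s) * ω s + (1 - t / s) * ω 0 ≤ ω t := by simpa [smul_eq_mul] using hc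
      nlinarith
    calc t * ω s = s * ((t / s) * ω s) := by field_simp
    _ ≤ s * ω t := by nlinarith

lemma omegaEta_ge (ω η : ℝ → ℝ) (hω_nonneg : ∀ x ≥ (0:ℝ), 0 ≤ ω x)
    (hω_mono : MonotoneOn ω (Set.Ici 0))
    (hω_conc : ConcaveOn ℝ (Set.Ici 0) ω)
    (hη_pos : ∀ x > (0:ℝ), 0 < η x)
    (hη_mono : MonotoneOn η (Set.Ioi 0))
    {h : ℝ} (hh : 0 < h) :
    h / η h * ω (η h) ≤ omegaEta η ω h := by
  have hη : 0 < η h := hη_pos h hh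
  apply le_csInf
  · refine ⟨_, 1, fun j => if j = 0 then 0 else h, one_pos, by simp, by simp, ?_, rfl⟩
    intro j hj
    have : j = 0 := by omega
    simpa [this] using hh
  · rintro s ⟨m, x, hm, hx0, hxm, hinc, rfl⟩
    -- monotonicity of the partition points
    have mono : ∀ i j, i ≤ j → j ≤ m → x i ≤ x j := by
      intro i j hij hjm
      induction j with
      | zero => simp_all
      | succ k ih =>
        rcases eq_or_lt_of_le hij with rfl | hlt
        · exact le_rfl
        · exact (ih (by omega) (by omega)).trans (hinc k (by omega)).le
    -- per-term lower bound
    have key : ∀ j ∈ Finset.range m,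
        (x (j + 1) - x j) / η h * ω (η h) ≤
        max 1 ((x (j + 1) - x j) / η (x (j + 1))) * ω (x (j + 1) - x j) := by
      intro j hj
      rw [Finset.mem_range] at hj
      set Δ := x (j + 1) - x j with hΔdef
      have hΔ : 0 < Δ := sub_pos.mpr (hinc j hj)
      have hp0 : 0 < x (j + 1) := by
        have := mono 0 j (Nat.zero_le _) (by omega)
        rw [hx0] at this
        linarith [hinc j hj]
      have hph : x (j + 1) ≤ h := by
        have := mono (j + 1) m (by omega) le_rfl
        rwa [hxm] at this
      have hep : 0 < η (x (j + 1)) := hη_pos _ hp0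
      have heph : η (x (j + 1)) ≤ η h := hη_mono (Set.mem_Ioi.mpr hp0) (Set.mem_Ioi.mpr hh) hph
      rcases le_or_gt Δ (η h) with hc | hc
      · -- small interval : use concavity
        have h1 : Δ * ω (η h) ≤ η h * ω Δ := conc_aux ω hω_nonneg hω_conc hΔ.le hc
        have h2 : Δ / η h * ω (η h) ≤ ω Δ := by
          rw [div_mul_eq_mul_div, div_le_iff₀ hη]
          nlinarith [h1]
        calc Δ / η h * ω (η h) ≤ ω Δ := h2
        _ = 1 * ω Δ := (one_mul _).symm
        _ ≤ max 1 (Δ / η (x (j + 1))) * ω Δ := by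
            apply mul_le_mul_of_nonneg_right (le_max_left _ _) (hω_nonneg _ hΔ.le)
      · -- large interval
        have hωΔ : ω (η h) ≤ ω Δ := hω_mono (Set.mem_Ici.mpr hη.le) (Set.mem_Ici.mpr hΔ.le) hc.le
        have hdiv : Δ / η h ≤ Δ / η (x (j + 1)) := by gcongr
        calc Δ / η h * ω (η h) ≤ (Δ / η (x (j + 1))) * ω Δ := by
              apply mul_le_mul hdiv hωΔ (hω_nonneg _ hη.le)
              positivity
        _ ≤ max 1 (Δ / η (x (j + 1))) * ω Δ := by
              apply mul_le_mul_of_nonneg_right (le_max_right _ _) (hω_nonneg _ hΔ.le)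
    have hsum := Finset.sum_le_sum key
    have htel : ∑ j ∈ Finset.range m, (x (j + 1) - x j) = h := by
      rw [Finset.sum_range_sub, hx0, hxm, sub_zero]
    calc h / η h * ω (η h)
        = ∑ j ∈ Finset.range m, (x (j + 1) - x j) / η h * ω (η h) := by
          rw [← Finset.sum_mul, ← Finset.sum_div, htel]
    _ ≤ _ := hsum

theorem condition_star_omegaEta (ω η : ℝ → ℝ)
    (hω_nonneg : ∀ x ≥ (0:ℝ), 0 ≤ ω x)
    (hω_mono : MonotoneOn ω (Set.Ici 0))
    (hω_lim : Filter.Tendsto ω (nhdsWithin 0 (Set.Ioi 0)) (nhds 0))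
    (hω_conc : ConcaveOn ℝ (Set.Ici 0) ω)
    (hstar : (⨅ n : ℕ+, Filter.liminf
      (fun h : ℝ => ω h / ((n : ℝ) * ω (h / (n : ℝ)))) Filter.atTop) = 0)
    (hη_pos : ∀ x > (0:ℝ), 0 < η x)
    (hη_mono : MonotoneOn η (Set.Ioi 0))
    (hη_lim : Filter.Tendsto (fun h : ℝ => η h / h) Filter.atTop (nhds 0)) :
    Filter.liminf (fun h : ℝ => ω h / omegaEta η ω h) Filter.atTop = 0 := by
  classical
  set u : ℝ → ℝ := fun h => ω h / omegaEta η ω h with hu_def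
  set g : ℕ+ → ℝ → ℝ := fun n h => ω h / ((n : ℝ) * ω (h / (n : ℝ))) with hg_def
  -- the main eventual estimates
  have hEv : ∀ n : ℕ+, ∀ᶠ h : ℝ in Filter.atTop,
      0 ≤ u h ∧ u h ≤ g n h ∧ 0 ≤ g n h ∧ g n h ≤ 1 := by
    intro n
    have hnpos : (0:ℝ) < (n : ℝ) := by exact_mod_cast n.pos
    have h1 : ∀ᶠ h : ℝ in Filter.atTop, η h / h < 1 / (n : ℝ) :=
      hη_lim.eventually (gt_mem_nhds (by positivity))
    filter_upwards [h1, Filter.eventually_gt_atTop (0:ℝ)] with h hsm hh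
    have hη : 0 < η h := hη_pos h hh
    have hηn : η h ≤ h / (n : ℝ) := by
      rw [div_lt_div_iff₀ hh hnpos] at hsm
      rw [le_div_iff₀ hnpos]
      nlinarith
    have hhn : 0 < h / (n : ℝ) := by positivity
    -- omegaEta lower bound
    have hOn : (n : ℝ) * ω (h / (n : ℝ)) ≤ omegaEta η ω h := by
      have hge := omegaEta_ge ω η hω_nonneg hω_mono hω_conc hη_pos hη_mono hh
      have hca : η h * ω (h / (n : ℝ)) ≤ (h / (n : ℝ)) * ω (η h) :=
        conc_aux ω hω_nonneg hω_conc hη.le hηn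
      have hmid : (n : ℝ) * ω (h / (n : ℝ)) ≤ h / η h * ω (η h) := by
        rw [div_mul_eq_mul_div, le_div_iff₀ hη]
        have hca2 := mul_le_mul_of_nonneg_left hca hnpos.le
        have hid : (n : ℝ) * (h / (n : ℝ) * ω (η h)) = h * ω (η h) := by
          field_simp
        rw [hid] at hca2
        ring_nf at hca2 ⊢
        linarith
      exact hmid.trans hge
    have hωh : 0 ≤ ω h := hω_nonneg h hh.le
    have hωhn : 0 ≤ ω (h / (n : ℝ)) := hω_nonneg _ hhn.le
    have hωsub : ω h ≤ (n : ℝ) * ω (h / (n : ℝ)) := by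
      have hca : (h / (n : ℝ)) * ω h ≤ h * ω (h / (n : ℝ)) :=
        conc_aux ω hω_nonneg hω_conc hhn.le
          (div_le_self hh.le (by exact_mod_cast n.one_le))
      have h2 : h * ω h ≤ h * ((n : ℝ) * ω (h / (n : ℝ))) := by
        calc h * ω h = (n : ℝ) * (h / (n : ℝ) * ω h) := by field_simp
        _ ≤ (n : ℝ) * (h * ω (h / (n : ℝ))) := mul_le_mul_of_nonneg_left hca hnpos.le
        _ = h * ((n : ℝ) * ω (h / (n : ℝ))) := by ring
      exact le_of_mul_le_mul_left h2 hh
    have hOη : 0 ≤ omegaEta η ω h := le_trans (by positivity) hOn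
    have hu0 : 0 ≤ u h := div_nonneg hωh hOη
    rcases eq_or_lt_of_le (by positivity : (0:ℝ) ≤ (n : ℝ) * ω (h / (n : ℝ))) with hz | hz
    · -- degenerate case : everything is zero
      have hω0 : ω h = 0 := le_antisymm (by rw [← hz] at hωsub; exact hωsub) hωh
      constructor
      · exact hu0
      refine ⟨?_, ?_, ?_⟩ <;> simp [hg_def, hu_def, hω0]
    · refine ⟨hu0, ?_, ?_, ?_⟩
      · show ω h / omegaEta η ω h ≤ ω h / ((n : ℝ) * ω (h / (n : ℝ)))
        gcongr
      · exact div_nonneg hωh (by positivity)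
      · exact div_le_one_of_le₀ hωsub (by positivity)
  -- basic boundedness facts
  have hbdd_u : Filter.IsBoundedUnder (· ≥ ·) Filter.atTop u :=
    ⟨0, by
      rw [Filter.eventually_map]
      exact (hEv 1).mono fun h hh => hh.1⟩
  have hcobdd_u : Filter.IsCoboundedUnder (· ≥ ·) Filter.atTop u :=
    Filter.isCoboundedUnder_ge_of_eventually_le _
      ((hEv 1).mono fun h hh => hh.2.1.trans hh.2.2.2)
  have hL0 : ∀ n : ℕ+, (0:ℝ) ≤ Filter.liminf (g n) Filter.atTop := by
    intro n
    apply Filter.le_liminf_of_le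
    · exact Filter.isCoboundedUnder_ge_of_eventually_le _
        ((hEv n).mono fun h hh => hh.2.2.2)
    · exact (hEv n).mono fun h hh => hh.2.2.1
  have hle : ∀ ε : ℝ, 0 < ε → Filter.liminf u Filter.atTop ≤ ε := by
    intro ε hε
    have hlt : (⨅ n : ℕ+, Filter.liminf (g n) Filter.atTop) < ε := by
      rw [hg_def]; rw [hstar]; exact hε
    obtain ⟨n, hn⟩ := exists_lt_of_ciInf_lt hlt
    have hfreq : ∃ᶠ h in Filter.atTop, g n h < ε :=
      Filter.frequently_lt_of_liminf_lt
        (Filter.isCoboundedUnder_ge_of_eventually_le _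
          ((hEv n).mono fun h hh => hh.2.2.2)) hn
    have hfreq2 : ∃ᶠ h in Filter.atTop, u h ≤ ε :=
      (hfreq.and_eventually (hEv n)).mono fun h ⟨h1, h2⟩ => (h2.2.1.trans h1.le)
    exact Filter.liminf_le_of_frequently_le hfreq2 hbdd_u
  have hge0 : (0:ℝ) ≤ Filter.liminf u Filter.atTop :=
    Filter.le_liminf_of_le hcobdd_u ((hEv 1).mono fun h hh => hh.1)
  refine le_antisymm ?_ hge0
  by_contra hcon
  push_neg at hcon
  have := hle _ (half_pos hcon)
  linarith
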